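/- arXiv:1303.2635 — 6 statements merged into one kernel-verified Lean document; each statement's English description precedes it below -/
import Mathlib

section
/- For nonzero integers n and n₁ with n₁ ≠ n, let R(n,n₁) = 3 n n₁ (n - n₁) - (1/n)(1 - n³/(n n₁ (n - n₁))). Then |R(n,n₁)| ≥ c |n| |n₁| |n - n₁| for some absolute constant c > 0. -/
/-!
Since `m(n) = n³ - 1/n`, the resonance function is
`R = 3 n n₁ (n - n₁) - (1/n - 1/n₁ - 1/(n - n₁))`.
For nonzero integers each of the three reciprocals has absolute value at most `1`, while
`|n n₁ (n - n₁)| ≥ 2`; hence `|R| ≥ 3 |n n₁ (n - n₁)| - 3 ≥ (3/2) |n n₁ (n - n₁)|`.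
-/

lemma one_div_mul_one_sub_pow_three_div_eq {K : Type*} [Field K] (a b : K) (ha : a ≠ 0)
    (hb : b ≠ 0) (hab : a - b ≠ 0) :
    1 / a * (1 - a ^ 3 / (a * b * (a - b))) = a⁻¹ - b⁻¹ - (a - b)⁻¹ := by
  field_simp
  ring

section LinearOrderedField

variable {K : Type*} [Field K] [LinearOrder K] [IsStrictOrderedRing K]

lemma Int.abs_inv_cast_le_one {k : ℤ} (hk : k ≠ 0) : |(k : K)⁻¹| ≤ 1 := by
  rw [abs_inv]
  exact inv_le_one_of_one_le₀ (by exact_mod_cast Int.one_le_abs hk)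

lemma Int.abs_inv_sub_inv_sub_inv_le_three {a b : ℤ} (ha : a ≠ 0) (hb : b ≠ 0) (hab : a ≠ b) :
    |(a : K)⁻¹ - (b : K)⁻¹ - ((a : K) - b)⁻¹| ≤ 3 := by
  have hab' : |((a - b : ℤ) : K)⁻¹| ≤ 1 := Int.abs_inv_cast_le_one (sub_ne_zero.mpr hab)
  push_cast at hab'
  calc |(a : K)⁻¹ - (b : K)⁻¹ - ((a : K) - b)⁻¹|
      ≤ |(a : K)⁻¹ - (b : K)⁻¹| + |((a : K) - b)⁻¹| := abs_sub _ _
    _ ≤ |(a : K)⁻¹| + |(b : K)⁻¹| + |((a : K) - b)⁻¹| := by gcongr; exact abs_sub _ _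
    _ ≤ 3 := by linarith [Int.abs_inv_cast_le_one (K := K) ha, Int.abs_inv_cast_le_one (K := K) hb]

end LinearOrderedField

lemma Int.two_le_abs_mul_abs_mul_abs_sub {a b : ℤ} (ha : a ≠ 0) (hb : b ≠ 0) (hab : a ≠ b) :
    2 ≤ |a| * |b| * |a - b| := by
  have h₁ := Int.one_le_abs ha
  have h₂ := Int.one_le_abs hb
  have h₃ := Int.one_le_abs (sub_ne_zero.mpr hab)
  rcases le_or_gt 2 |a| with h | h
  · nlinarith [mul_le_mul h h₂ zero_le_one (by positivity)]
  rcases le_or_gt 2 |b| with h' | h'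
  · nlinarith [mul_le_mul h₁ h' zero_le_two (by positivity)]
  -- Otherwise `a, b ∈ {±1}`, and then `a ≠ b` forces `|a - b| = 2`.
  rw [abs_lt] at h h'
  obtain rfl | rfl : a = 1 ∨ a = -1 := by omega
  all_goals obtain rfl | rfl : b = 1 ∨ b = -1 := by omega
  all_goals simp_all

/-- The resonance function for the periodic Ostrovsky equation,
`R(n,n₁) = 3 n n₁ (n - n₁) - (1/n)(1 - n³/(n n₁ (n - n₁)))`. -/
theorem ostrovsky_resonance_lower_bound :
    ∃ c : ℝ, 0 < c ∧ ∀ n n₁ : ℤ, n ≠ 0 → n₁ ≠ 0 → n₁ ≠ n →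
      c * (|(n : ℝ)| * |(n₁ : ℝ)| * |(n : ℝ) - (n₁ : ℝ)|) ≤
        |3 * (n : ℝ) * (n₁ : ℝ) * ((n : ℝ) - (n₁ : ℝ)) -
          (1 / (n : ℝ)) * (1 - (n : ℝ) ^ 3 / ((n : ℝ) * (n₁ : ℝ) * ((n : ℝ) - (n₁ : ℝ))))| := by
  refine ⟨3 / 2, by norm_num, fun n n₁ hn hn₁ hne => ?_⟩
  have hne' : n ≠ n₁ := hne.symm
  have hsub : (n : ℝ) - n₁ ≠ 0 := sub_ne_zero.mpr (by exact_mod_cast hne')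
  rw [one_div_mul_one_sub_pow_three_div_eq _ _ (by exact_mod_cast hn) (by exact_mod_cast hn₁) hsub]
  have hprod : (2 : ℝ) ≤ |(n : ℝ)| * |(n₁ : ℝ)| * |(n : ℝ) - n₁| := by
    exact_mod_cast Int.two_le_abs_mul_abs_mul_abs_sub hn hn₁ hne'
  have hcorr := Int.abs_inv_sub_inv_sub_inv_le_three (K := ℝ) hn hn₁ hne'
  have hmain : |3 * (n : ℝ) * n₁ * (n - n₁)| = 3 * (|(n : ℝ)| * |(n₁ : ℝ)| * |(n : ℝ) - n₁|) := by
    rw [abs_mul, abs_mul, abs_mul, abs_of_pos three_pos]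
    ring
  have hrev := abs_sub_abs_le_abs_sub (3 * (n : ℝ) * n₁ * (n - n₁)) ((n : ℝ)⁻¹ - (n₁ : ℝ)⁻¹ - ((n : ℝ) - n₁)⁻¹)
  linarith
end

section
/- For every 0 < ρ < 1 there is a constant C = C(ρ) > 0 such that for all α ∈ ℝ, ∫_ℝ dβ / ((1 + |β|)^ρ (1 + |α - β|)) ≤ C · (1 + log(1 + |α|)) / (1 + |α|)^ρ. -/
/-!
Put `a = 1 + |α|`. Where `|β - α| ≤ a/2` one has `1 + |β| ≥ a/2`, so the kernel is at most
`(2/a)^ρ (1 + |β - α|)⁻¹`, whose integral over that window is `≲ a^(-ρ) log a`.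
Elsewhere `1 + |α - β| ≳ max(a, |β|)`, so the kernel is at most `(2/a) (1 + |β|)^(-ρ)`
for `|β| ≤ 2a` (integral `≲ a^(-ρ)/(1 - ρ)`) and at most `2 |β|^(-1-ρ)` for `|β| > 2a`
(integral `≲ a^(-ρ)/ρ`).
-/

open MeasureTheory Set Real

theorem integrable_comp_abs {f : ℝ → ℝ} (hf : IntegrableOn f (Ioi 0)) :
    Integrable (fun x => f |x|) := by
  have hpos : IntegrableOn (fun x => f |x|) (Ioi 0) :=
    hf.congr_fun (fun x hx => by rw [abs_of_pos hx]) measurableSet_Ioi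
  have hneg : IntegrableOn (fun x => f |x|) (Iio 0) := by
    simpa only [abs_neg] using
      IntegrableOn.comp_neg_Iio (c := 0) (f := fun x => f |x|) (by rwa [neg_zero])
  rw [← integrableOn_univ, ← Iio_union_Ici]
  exact hneg.union (Iff.mpr integrableOn_Ici_iff_integrableOn_Ioi hpos)

theorem integrable_indicator_comp_abs {f : ℝ → ℝ} {s : Set ℝ} (hs : MeasurableSet s)
    (hf : IntegrableOn f s) : Integrable (fun x => s.indicator f |x|) :=
  integrable_comp_abs ((integrable_indicator_iff hs).2 hf).integrableOn

theorem integral_indicator_Icc_comp_abs (f : ℝ → ℝ) {R : ℝ} (hR : 0 ≤ R) :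
    ∫ x, (Icc 0 R).indicator f |x| = 2 * ∫ x in 0..R, f x := by
  have hIoc : Ioi 0 ∩ Icc 0 R = Ioc 0 R :=
    Set.ext fun x => ⟨fun h => ⟨h.1, h.2.2⟩, fun h => ⟨h.1, h.1.le, h.2⟩⟩
  rw [integral_comp_abs, setIntegral_indicator measurableSet_Icc, hIoc,
    intervalIntegral.integral_of_le hR]

theorem integral_indicator_Ioi_comp_abs (f : ℝ → ℝ) {R : ℝ} (hR : 0 ≤ R) :
    ∫ x, (Ioi R).indicator f |x| = 2 * ∫ x in Ioi R, f x := by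
  rw [integral_comp_abs, setIntegral_indicator measurableSet_Ioi, Ioi_inter_Ioi,
    max_eq_right hR]

theorem integral_inv_one_add {R : ℝ} (hR : 0 ≤ R) :
    ∫ x in 0..R, (1 + x)⁻¹ = log (1 + R) := by
  rw [intervalIntegral.integral_comp_add_left (fun x => x⁻¹), add_zero,
    integral_inv (notMem_uIcc_of_lt one_pos (by linarith))]
  norm_num

theorem integral_one_add_rpow {R r : ℝ} (hR : 0 ≤ R) (hr : r ≠ -1) :
    ∫ x in 0..R, (1 + x) ^ r = ((1 + R) ^ (r + 1) - 1) / (r + 1) := by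
  rw [intervalIntegral.integral_comp_add_left (fun x => x ^ r), add_zero,
    integral_rpow (Or.inr ⟨hr, notMem_uIcc_of_lt one_pos (by linarith)⟩)]
  norm_num

section Majorants

variable {ρ a : ℝ}

noncomputable def nearMajorant (ρ a : ℝ) : ℝ → ℝ :=
  (Icc 0 (a / 2)).indicator fun t => (2 / a) ^ ρ * (1 + t)⁻¹

noncomputable def midMajorant (ρ a : ℝ) : ℝ → ℝ :=
  (Icc 0 (2 * a)).indicator fun t => 2 / a * (1 + t) ^ (-ρ)

noncomputable def farMajorant (ρ a : ℝ) : ℝ → ℝ :=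
  (Ioi (2 * a)).indicator fun t => 2 * t ^ (-(1 + ρ))

theorem nearMajorant_nonneg (t : ℝ) : 0 ≤ nearMajorant ρ a t := by
  refine indicator_nonneg (fun s (hs : s ∈ Icc 0 (a / 2)) => ?_) t
  obtain ⟨hs0, hsa⟩ := hs
  have : 0 ≤ a := by linarith
  positivity

theorem midMajorant_nonneg (t : ℝ) : 0 ≤ midMajorant ρ a t := by
  refine indicator_nonneg (fun s (hs : s ∈ Icc 0 (2 * a)) => ?_) t
  obtain ⟨hs0, hsa⟩ := hs
  have : 0 ≤ a := by linarith
  positivity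

theorem farMajorant_nonneg (ha : 0 ≤ a) (t : ℝ) : 0 ≤ farMajorant ρ a t := by
  refine indicator_nonneg (fun s (hs : 2 * a < s) => ?_) t
  have : 0 ≤ s := by linarith
  positivity

theorem integrable_nearMajorant_comp_abs : Integrable fun x => nearMajorant ρ a |x| :=
  integrable_indicator_comp_abs measurableSet_Icc <| ContinuousOn.integrableOn_Icc <|
    continuousOn_const.mul <| (continuousOn_const.add continuousOn_id).inv₀ fun t ht =>
      (show (0 : ℝ) < 1 + t by linarith [ht.1]).ne'

theorem integrable_midMajorant_comp_abs : Integrable fun x => midMajorant ρ a |x| :=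
  integrable_indicator_comp_abs measurableSet_Icc <| ContinuousOn.integrableOn_Icc <|
    continuousOn_const.mul <| (continuousOn_const.add continuousOn_id).rpow_const fun t ht =>
      Or.inl (show (0 : ℝ) < 1 + t by linarith [ht.1]).ne'

theorem integrable_farMajorant_comp_abs (hρ : 0 < ρ) (ha : 0 < a) :
    Integrable fun x => farMajorant ρ a |x| :=
  integrable_indicator_comp_abs measurableSet_Ioi <|
    (integrableOn_Ioi_rpow_of_lt (by linarith) (by positivity)).const_mul 2

theorem integral_nearMajorant_comp_abs_le (hρ : ρ ≤ 1) (ha : 1 ≤ a) :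
    ∫ x, nearMajorant ρ a |x| ≤ 4 * (1 + log a) / a ^ ρ := by
  have hlog : log (1 + a / 2) ≤ 1 + log a := calc
    log (1 + a / 2) ≤ log (2 * a) := log_le_log (by positivity) (by linarith)
    _ = log 2 + log a := log_mul two_ne_zero (by positivity)
    _ ≤ 1 + log a := by linarith [log_two_lt_d9]
  have h2ρ : (2 : ℝ) ^ ρ ≤ 2 := rpow_le_self_of_one_le one_le_two hρ
  rw [nearMajorant, integral_indicator_Icc_comp_abs _ (by positivity),
    intervalIntegral.integral_const_mul, integral_inv_one_add (by positivity),
    div_rpow zero_le_two (by positivity)]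
  calc 2 * (2 ^ ρ / a ^ ρ * log (1 + a / 2)) = 2 * 2 ^ ρ * log (1 + a / 2) / a ^ ρ := by ring
    _ ≤ 2 * 2 * (1 + log a) / a ^ ρ := by
      have : 0 ≤ log (1 + a / 2) := log_nonneg (by linarith)
      gcongr
    _ = 4 * (1 + log a) / a ^ ρ := by ring

theorem integral_midMajorant_comp_abs_le (hρ0 : 0 ≤ ρ) (hρ1 : ρ < 1) (ha : 1 ≤ a) :
    ∫ x, midMajorant ρ a |x| ≤ 12 / (1 - ρ) / a ^ ρ := by
  have hpow : (1 + 2 * a) ^ (1 - ρ) ≤ 3 * a / a ^ ρ := calc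
    (1 + 2 * a) ^ (1 - ρ) ≤ (3 * a) ^ (1 - ρ) := by gcongr; linarith
    _ = 3 ^ (1 - ρ) * (a / a ^ ρ) := by
      rw [mul_rpow (by norm_num) (by positivity), rpow_sub (by positivity : 0 < a), rpow_one]
    _ ≤ 3 * (a / a ^ ρ) := by
      gcongr
      exact rpow_le_self_of_one_le (by norm_num) (by linarith)
    _ = 3 * a / a ^ ρ := by ring
  have h1ρ : 0 < 1 - ρ := by linarith
  rw [midMajorant, integral_indicator_Icc_comp_abs _ (by positivity),
    intervalIntegral.integral_const_mul, integral_one_add_rpow (by positivity) (by linarith),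
    show -ρ + 1 = 1 - ρ by ring]
  calc 2 * (2 / a * (((1 + 2 * a) ^ (1 - ρ) - 1) / (1 - ρ)))
      ≤ 2 * (2 / a * (3 * a / a ^ ρ / (1 - ρ))) := by gcongr; linarith
    _ = 12 / (1 - ρ) / a ^ ρ := by field_simp; ring

theorem integral_farMajorant_comp_abs_le (hρ : 0 < ρ) (ha : 0 < a) :
    ∫ x, farMajorant ρ a |x| ≤ 4 / ρ / a ^ ρ := by
  rw [farMajorant, integral_indicator_Ioi_comp_abs _ (by positivity), integral_const_mul,
    integral_Ioi_rpow_of_lt (by linarith) (by positivity), show -(1 + ρ) + 1 = -ρ by ring,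
    neg_div_neg_eq]
  have hpow : (2 * a) ^ (-ρ) ≤ a ^ (-ρ) :=
    rpow_le_rpow_of_nonpos ha (by linarith) (by linarith)
  calc 2 * (2 * ((2 * a) ^ (-ρ) / ρ)) ≤ 2 * (2 * (a ^ (-ρ) / ρ)) := by gcongr
    _ = 4 / ρ / a ^ ρ := by rw [rpow_neg ha.le]; field_simp; ring

end Majorants

section Kernel

variable {ρ α β : ℝ}

theorem kernel_le_of_near (hρ : 0 ≤ ρ) (h : |β - α| ≤ (1 + |α|) / 2) :
    1 / ((1 + |β|) ^ ρ * (1 + |α - β|)) ≤ (2 / (1 + |α|)) ^ ρ * (1 + |β - α|)⁻¹ := by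
  have hβ : (1 + |α|) / 2 ≤ 1 + |β| := by
    linarith [abs_sub_abs_le_abs_sub α β, abs_sub_comm α β]
  calc 1 / ((1 + |β|) ^ ρ * (1 + |α - β|))
      ≤ 1 / (((1 + |α|) / 2) ^ ρ * (1 + |β - α|)) := by rw [abs_sub_comm]; gcongr
    _ = (2 / (1 + |α|)) ^ ρ * (1 + |β - α|)⁻¹ := by
        rw [one_div, mul_inv, ← inv_rpow (by positivity), inv_div]

theorem kernel_le_of_not_near (h : (1 + |α|) / 2 < |β - α|) :
    1 / ((1 + |β|) ^ ρ * (1 + |α - β|)) ≤ 2 / (1 + |α|) * (1 + |β|) ^ (-ρ) := by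
  have hαβ : (1 + |α|) / 2 ≤ 1 + |α - β| := by linarith [abs_sub_comm α β]
  calc 1 / ((1 + |β|) ^ ρ * (1 + |α - β|)) = (1 + |β|) ^ (-ρ) / (1 + |α - β|) := by
        rw [rpow_neg (by positivity)]; field_simp
    _ ≤ (1 + |β|) ^ (-ρ) / ((1 + |α|) / 2) := by gcongr
    _ = 2 / (1 + |α|) * (1 + |β|) ^ (-ρ) := by field_simp

theorem kernel_le_of_far (hρ : 0 ≤ ρ) (h : 2 * (1 + |α|) < |β|) :
    1 / ((1 + |β|) ^ ρ * (1 + |α - β|)) ≤ 2 * |β| ^ (-(1 + ρ)) := by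
  have hβ : 0 < |β| := by linarith [abs_nonneg α]
  have hαβ : |β| / 2 ≤ 1 + |α - β| := by
    linarith [abs_sub_abs_le_abs_sub β α, abs_sub_comm α β]
  calc 1 / ((1 + |β|) ^ ρ * (1 + |α - β|))
      ≤ 1 / (|β| ^ ρ * (|β| / 2)) := by gcongr; linarith
    _ = 2 * |β| ^ (-(1 + ρ)) := by
        rw [rpow_neg hβ.le, add_comm, rpow_add_one hβ.ne']; field_simp

theorem kernel_le_majorants (hρ : 0 ≤ ρ) (α β : ℝ) :
    1 / ((1 + |β|) ^ ρ * (1 + |α - β|)) ≤ nearMajorant ρ (1 + |α|) |β - α| +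
      midMajorant ρ (1 + |α|) |β| + farMajorant ρ (1 + |α|) |β| := by
  have hnear := nearMajorant_nonneg (ρ := ρ) (a := 1 + |α|) |β - α|
  have hmid := midMajorant_nonneg (ρ := ρ) (a := 1 + |α|) |β|
  have hfar := farMajorant_nonneg (ρ := ρ) (by positivity : 0 ≤ 1 + |α|) |β|
  by_cases h₁ : |β - α| ≤ (1 + |α|) / 2
  · have : nearMajorant ρ (1 + |α|) |β - α| = (2 / (1 + |α|)) ^ ρ * (1 + |β - α|)⁻¹ :=
      indicator_of_mem (show |β - α| ∈ Icc 0 _ from ⟨abs_nonneg _, h₁⟩) _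
    linarith [kernel_le_of_near hρ h₁]
  by_cases h₂ : |β| ≤ 2 * (1 + |α|)
  · have : midMajorant ρ (1 + |α|) |β| = 2 / (1 + |α|) * (1 + |β|) ^ (-ρ) :=
      indicator_of_mem (show |β| ∈ Icc 0 _ from ⟨abs_nonneg _, h₂⟩) _
    linarith [kernel_le_of_not_near (ρ := ρ) (not_le.1 h₁)]
  · have : farMajorant ρ (1 + |α|) |β| = 2 * |β| ^ (-(1 + ρ)) :=
      indicator_of_mem (not_le.1 h₂) _
    linarith [kernel_le_of_far hρ (not_le.1 h₂)]

theorem integral_kernel_le_integral_majorants (hρ : 0 < ρ) (α : ℝ) :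
    ∫ β, 1 / ((1 + |β|) ^ ρ * (1 + |α - β|)) ≤ (∫ x, nearMajorant ρ (1 + |α|) |x|) +
      (∫ x, midMajorant ρ (1 + |α|) |x|) + ∫ x, farMajorant ρ (1 + |α|) |x| := by
  have hnear : Integrable fun β => nearMajorant ρ (1 + |α|) |β - α| :=
    integrable_nearMajorant_comp_abs.comp_sub_right α
  have hmid := integrable_midMajorant_comp_abs (ρ := ρ) (a := 1 + |α|)
  have hfar := integrable_farMajorant_comp_abs hρ (by positivity : 0 < 1 + |α|)
  have hnear_mid : Integrable fun β =>
      nearMajorant ρ (1 + |α|) |β - α| + midMajorant ρ (1 + |α|) |β| :=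
    hnear.add hmid
  calc ∫ β, 1 / ((1 + |β|) ^ ρ * (1 + |α - β|))
      ≤ ∫ β, (nearMajorant ρ (1 + |α|) |β - α| + midMajorant ρ (1 + |α|) |β| +
          farMajorant ρ (1 + |α|) |β|) :=
        integral_mono_of_nonneg (ae_of_all _ fun β => by positivity) (hnear_mid.add hfar)
          (ae_of_all _ (kernel_le_majorants hρ.le α))
    _ = _ := by
        rw [integral_add hnear_mid hfar, integral_add hnear hmid,
          integral_sub_right_eq_self (fun x => nearMajorant ρ (1 + |α|) |x|)]

end Kernel

theorem convolution_estimate_rho (ρ : ℝ) (hρ0 : 0 < ρ) (hρ1 : ρ < 1) :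
    ∃ C : ℝ, 0 < C ∧ ∀ α : ℝ,
      ∫ β : ℝ, 1 / ((1 + |β|) ^ ρ * (1 + |α - β|)) ≤
        C * (1 + Real.log (1 + |α|)) / (1 + |α|) ^ ρ := by
  have h1ρ : 0 < 1 - ρ := by linarith
  refine ⟨4 + 12 / (1 - ρ) + 4 / ρ, by positivity, fun α => ?_⟩
  have ha : 1 ≤ 1 + |α| := le_add_of_nonneg_right (abs_nonneg α)
  have hlog : 0 ≤ log (1 + |α|) := log_nonneg ha
  grw [integral_kernel_le_integral_majorants hρ0 α,
    integral_nearMajorant_comp_abs_le hρ1.le ha, integral_midMajorant_comp_abs_le hρ0.le hρ1 ha,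
    integral_farMajorant_comp_abs_le hρ0 (by linarith)]
  have hc : 0 ≤ 12 / (1 - ρ) + 4 / ρ := by positivity
  rw [← add_div, ← add_div]
  gcongr
  nlinarith
end

section
/- There exists a constant C > 0 such that for every τ ∈ ℝ and every nonzero integer n, ∑_{n₁ ∈ ℤ, n₁ ≠ 0, n₁ ≠ n} log(2 + |τ + m(n₁) + m(n - n₁)|) / (1 + |τ + m(n₁) + m(n - n₁)|) ≤ C. -/
/-!
Since `m(k) + m(n - k) = 3n k² - 3n² k + n³ - (1/k + 1/(n - k))` and `|1/k + 1/(n - k)| ≤ 2`,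
the quantity `|τ + m(k) + m(n - k)|` is, up to `2`, the absolute value of a real quadratic in `k`
with leading coefficient `3n`, where `|3n| ≥ 3`. Factoring that quadratic over `ℂ` and projecting
its roots to their real parts `r₁, r₂` gives `|τ + m(k) + m(n - k)| ≥ 3 (k - rᵢ)² - 2` for some `i`.
With `log u ≤ 4 u^{1/4}`, each summand is then at most
`8 ((1 + (k - r₁)²)^{-3/4} + (1 + (k - r₂)²)^{-3/4})`, and as `3/4 > 1/2` the sum of
`(1 + (k - x)²)^{-3/4}` over `k ∈ ℤ` is bounded uniformly in `x ∈ ℝ` (shift `k` by `round x`).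
-/

open Real

/-- The dispersion symbol `m(k) = k³ - 1/k` of the periodic Ostrovsky equation. -/
noncomputable def mOst (k : ℤ) : ℝ := (k : ℝ) ^ 3 - 1 / (k : ℝ)

theorem summable_one_add_sq_rpow_neg {s : ℝ} (hs : 1 / 2 < s) :
    Summable fun j : ℤ => (1 + (j : ℝ) ^ 2) ^ (-s) := by
  refine Summable.of_norm_bounded_eventually (summable_abs_int_rpow (b := 2 * s) (by linarith)) ?_
  filter_upwards [Filter.eventually_cofinite_ne 0] with j hj
  have hj2 : (|(j : ℝ)| ^ (2 : ℝ)) ^ (-s) = |(j : ℝ)| ^ (-(2 * s)) := by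
    rw [← rpow_mul (abs_nonneg _)]; ring_nf
  rw [norm_of_nonneg (by positivity), ← hj2, rpow_two, sq_abs]
  exact rpow_le_rpow_of_nonpos (by positivity) (by linarith) (by linarith)

theorem one_add_sq_rpow_neg_le {s t u : ℝ} (hs : 0 ≤ s) (htu : |t - u| ≤ 1 / 2) :
    (1 + t ^ 2) ^ (-s) ≤ 2 ^ s * (1 + u ^ 2) ^ (-s) := by
  have hu : 1 + u ^ 2 ≤ 2 * (1 + t ^ 2) := by
    have := abs_le.mp htu
    nlinarith [sq_nonneg (u - 2 * t)]
  calc (1 + t ^ 2) ^ (-s) = 2 ^ s * (2 * (1 + t ^ 2)) ^ (-s) := by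
        rw [mul_rpow (by norm_num) (by positivity), ← mul_assoc, ← rpow_add (by norm_num)]
        simp
    _ ≤ 2 ^ s * (1 + u ^ 2) ^ (-s) := by
        gcongr 2 ^ s * ?_
        exact rpow_le_rpow_of_nonpos (by positivity) hu (by linarith)

theorem le_mul_comp_intCast_sub_round {f : ℝ → ℝ} {c : ℝ}
    (hc : ∀ t u, |t - u| ≤ 1 / 2 → f t ≤ c * f u) (x : ℝ) (k : ℤ) :
    f (k - x) ≤ c * f (k - round x : ℤ) :=
  hc _ _ (by push_cast; rw [sub_sub_sub_cancel_left, abs_sub_comm]; exact abs_sub_round x)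

theorem summable_comp_intCast_sub {f : ℝ → ℝ} {c : ℝ} (hf : ∀ t, 0 ≤ f t)
    (hc : ∀ t u, |t - u| ≤ 1 / 2 → f t ≤ c * f u) (hs : Summable fun j : ℤ => f j)
    (x : ℝ) :
    Summable fun k : ℤ => f (k - x) :=
  .of_nonneg_of_le (fun _ => hf _) (le_mul_comp_intCast_sub_round hc x)
    ((((Equiv.subRight (round x)).summable_iff).mpr hs).mul_left c)

theorem tsum_comp_intCast_sub_le {f : ℝ → ℝ} {c : ℝ} (hf : ∀ t, 0 ≤ f t)
    (hc : ∀ t u, |t - u| ≤ 1 / 2 → f t ≤ c * f u) (hs : Summable fun j : ℤ => f j)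
    (x : ℝ) :
    ∑' k : ℤ, f (k - x) ≤ c * ∑' j : ℤ, f j := by
  rw [← (Equiv.subRight (round x)).tsum_eq (fun j : ℤ => f j), ← tsum_mul_left]
  exact (summable_comp_intCast_sub hf hc hs x).tsum_le_tsum (le_mul_comp_intCast_sub_round hc x)
    ((((Equiv.subRight (round x)).summable_iff).mpr hs).mul_left c)

theorem log_div_self_le_rpow {ε u w : ℝ} (hε : 0 < ε) (hε1 : ε ≤ 1) (hw : 0 < w)
    (hwu : w ≤ u) :
    log u / u ≤ w ^ (ε - 1) / ε := by
  have hu : 0 < u := hw.trans_le hwu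
  calc log u / u ≤ u ^ ε / ε / u := by gcongr; exact log_le_rpow_div hu.le hε
    _ = u ^ (ε - 1) / ε := by rw [rpow_sub_one hu.ne']; ring
    _ ≤ w ^ (ε - 1) / ε :=
        div_le_div_of_nonneg_right (rpow_le_rpow_of_nonpos hw hwu (by linarith)) hε.le

theorem log_two_add_div_one_add_le {y d : ℝ} (hy : 0 ≤ y) (hd : 3 * d ^ 2 - 2 ≤ y) :
    log (2 + y) / (1 + y) ≤ 8 * (1 + d ^ 2) ^ (-(3 / 4 : ℝ)) := by
  have hw : 1 + d ^ 2 ≤ 2 + 2 * y := by nlinarith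
  calc log (2 + y) / (1 + y) = 2 * (log (2 + y) / (2 + 2 * y)) := by field_simp
    _ ≤ 2 * (log (2 + 2 * y) / (2 + 2 * y)) := by gcongr; linarith
    _ ≤ 2 * ((1 + d ^ 2) ^ ((1 / 4 : ℝ) - 1) / (1 / 4)) :=
        mul_le_mul_of_nonneg_left
          (log_div_self_le_rpow (by norm_num) (by norm_num) (by positivity) hw) (by norm_num)
    _ = 8 * (1 + d ^ 2) ^ (-(3 / 4 : ℝ)) := by norm_num; ring

theorem quadratic_eq_mul_sub_mul_sub {K : Type*} [Field K] [NeZero (2 : K)] {a b c s : K}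
    (ha : a ≠ 0) (h : discrim a b c = s * s) (x : K) :
    a * x ^ 2 + b * x + c = a * ((x - (-b + s) / (2 * a)) * (x - (-b - s) / (2 * a))) := by
  rw [discrim] at h
  field_simp
  linear_combination -h

theorem exists_abs_quadratic_ge (a b c : ℝ) (ha : a ≠ 0) :
    ∃ r₁ r₂ : ℝ, ∀ x : ℝ, |a| * (x - r₁) ^ 2 ≤ |a * x ^ 2 + b * x + c| ∨
      |a| * (x - r₂) ^ 2 ≤ |a * x ^ 2 + b * x + c| := by
  obtain ⟨s, hs⟩ := IsAlgClosed.exists_eq_mul_self (discrim (a : ℂ) b c)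
  set z₁ : ℂ := (-b + s) / (2 * a)
  set z₂ : ℂ := (-b - s) / (2 * a)
  refine ⟨z₁.re, z₂.re, fun x => ?_⟩
  have hre (z : ℂ) : |x - z.re| ≤ ‖(x : ℂ) - z‖ := by
    simpa using Complex.abs_re_le_norm ((x : ℂ) - z)
  have hprod : |a| * (|x - z₁.re| * |x - z₂.re|) ≤ |a * x ^ 2 + b * x + c| :=
    calc |a| * (|x - z₁.re| * |x - z₂.re|)
        ≤ ‖(a : ℂ)‖ * (‖(x : ℂ) - z₁‖ * ‖(x : ℂ) - z₂‖) := by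
          rw [Complex.norm_real, norm_eq_abs]; gcongr <;> exact hre _
      _ = |a * x ^ 2 + b * x + c| := by
          rw [← norm_mul, ← norm_mul, ← quadratic_eq_mul_sub_mul_sub (by exact_mod_cast ha) hs,
            ← norm_eq_abs, ← Complex.norm_real]
          push_cast; rfl
  rcases le_total |x - z₁.re| |x - z₂.re| with h | h
  · left
    calc |a| * (x - z₁.re) ^ 2 = |a| * (|x - z₁.re| * |x - z₁.re|) := by rw [← sq, sq_abs]
      _ ≤ _ := by gcongr
      _ ≤ _ := hprod
  · right
    calc |a| * (x - z₂.re) ^ 2 = |a| * (|x - z₂.re| * |x - z₂.re|) := by rw [← sq, sq_abs]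
      _ ≤ _ := by gcongr
      _ ≤ _ := hprod

theorem abs_mOst_add_mOst_sub_sub_le {n k : ℤ} (hk : k ≠ 0) (hkn : k ≠ n) :
    |mOst k + mOst (n - k) - (3 * n * k ^ 2 - 3 * n ^ 2 * k + n ^ 3)| ≤ 2 := by
  have hinv {j : ℤ} (hj : j ≠ 0) : |1 / (j : ℝ)| ≤ 1 := by
    rw [abs_div, abs_one]
    exact div_le_one_of_le₀ (by exact_mod_cast Int.one_le_abs hj) (abs_nonneg _)
  have hrem : mOst k + mOst (n - k) - (3 * n * k ^ 2 - 3 * n ^ 2 * k + n ^ 3)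
      = -(1 / (k : ℝ) + 1 / ((n - k : ℤ) : ℝ)) := by
    unfold mOst; push_cast; ring
  rw [hrem, abs_neg]
  linarith [abs_add_le (1 / (k : ℝ)) (1 / ((n - k : ℤ) : ℝ)), hinv hk,
    hinv (sub_ne_zero.mpr hkn.symm)]

theorem exists_log_summand_le (τ : ℝ) {n : ℤ} (hn : n ≠ 0) :
    ∃ r₁ r₂ : ℝ, ∀ k : ℤ, k ≠ 0 → k ≠ n →
      log (2 + |τ + mOst k + mOst (n - k)|) / (1 + |τ + mOst k + mOst (n - k)|) ≤
        8 * ((1 + (k - r₁) ^ 2) ^ (-(3 / 4 : ℝ)) + (1 + (k - r₂) ^ 2) ^ (-(3 / 4 : ℝ))) := by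
  have ha : (3 : ℝ) ≤ |3 * (n : ℝ)| := by
    rw [abs_mul, abs_of_pos three_pos]
    linarith [show (1 : ℝ) ≤ |(n : ℝ)| by exact_mod_cast Int.one_le_abs hn]
  obtain ⟨r₁, r₂, hr⟩ :=
    exists_abs_quadratic_ge (3 * n) (-3 * n ^ 2) (n ^ 3 + τ) (by positivity)
  refine ⟨r₁, r₂, fun k hk hkn => ?_⟩
  have hy :
      |3 * n * k ^ 2 + -3 * n ^ 2 * k + (n ^ 3 + τ)| - 2 ≤ |τ + mOst k + mOst (n - k)| := by
    have hrem := abs_mOst_add_mOst_sub_sub_le hk hkn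
    have htri := abs_sub_abs_le_abs_sub (3 * n * k ^ 2 + -3 * n ^ 2 * k + (n ^ 3 + τ) : ℝ)
      (τ + mOst k + mOst (n - k))
    rw [abs_sub_comm] at htri
    ring_nf at htri hrem ⊢
    linarith
  have hw (r : ℝ) : 0 ≤ (1 + (k - r) ^ 2) ^ (-(3 / 4 : ℝ)) := by positivity
  rcases hr k with h | h
  · grw [log_two_add_div_one_add_le (abs_nonneg _) (by nlinarith : 3 * (k - r₁) ^ 2 - 2 ≤ _)]
    linarith [hw r₂]
  · grw [log_two_add_div_one_add_le (abs_nonneg _) (by nlinarith : 3 * (k - r₂) ^ 2 - 2 ≤ _)]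
    linarith [hw r₁]

theorem summable_one_add_intCast_sub_sq_rpow_neg {s : ℝ} (hs : 1 / 2 < s) (x : ℝ) :
    Summable fun k : ℤ => (1 + (k - x) ^ 2) ^ (-s) :=
  summable_comp_intCast_sub (f := fun t => (1 + t ^ 2) ^ (-s)) (fun _ => by positivity)
    (fun _ _ => one_add_sq_rpow_neg_le (by linarith)) (summable_one_add_sq_rpow_neg hs) x

theorem tsum_one_add_intCast_sub_sq_rpow_neg_le {s : ℝ} (hs : 1 / 2 < s) (x : ℝ) :
    ∑' k : ℤ, (1 + (k - x) ^ 2) ^ (-s) ≤ 2 ^ s * ∑' j : ℤ, (1 + (j : ℝ) ^ 2) ^ (-s) :=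
  tsum_comp_intCast_sub_le (f := fun t => (1 + t ^ 2) ^ (-s)) (fun _ => by positivity)
    (fun _ _ => one_add_sq_rpow_neg_le (by linarith)) (summable_one_add_sq_rpow_neg hs) x

theorem ostrovsky_log_sum_one :
    ∃ C : ℝ, 0 < C ∧ ∀ (τ : ℝ) (n : ℤ), n ≠ 0 →
      ∑' n₁ : {n₁ : ℤ // n₁ ≠ 0 ∧ n₁ ≠ n},
        Real.log (2 + |τ + mOst (n₁ : ℤ) + mOst (n - (n₁ : ℤ))|) /
          (1 + |τ + mOst (n₁ : ℤ) + mOst (n - (n₁ : ℤ))|) ≤ C := by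
  set Z := ∑' j : ℤ, (1 + (j : ℝ) ^ 2) ^ (-(3 / 4 : ℝ))
  have hZ : 0 < Z := (summable_one_add_sq_rpow_neg (by norm_num)).tsum_pos
    (fun _ => by positivity) 0 (by positivity)
  refine ⟨16 * (2 ^ (3 / 4 : ℝ) * Z), by positivity, fun τ n hn => ?_⟩
  obtain ⟨r₁, r₂, hle⟩ := exists_log_summand_le τ hn
  have hsum (r : ℝ) := summable_one_add_intCast_sub_sq_rpow_neg (s := 3 / 4) (by norm_num) r
  have hbound (r : ℝ) := tsum_one_add_intCast_sub_sq_rpow_neg_le (s := 3 / 4) (by norm_num) r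
  set G : ℤ → ℝ := fun k =>
    8 * ((1 + (k - r₁) ^ 2) ^ (-(3 / 4 : ℝ)) + (1 + (k - r₂) ^ 2) ^ (-(3 / 4 : ℝ)))
  have hG : Summable G := ((hsum r₁).add (hsum r₂)).mul_left 8
  have hG' := hG.subtype {k | k ≠ 0 ∧ k ≠ n}
  have hle' (k : {k : ℤ // k ≠ 0 ∧ k ≠ n}) := hle k k.2.1 k.2.2
  have hnonneg (k : {k : ℤ // k ≠ 0 ∧ k ≠ n}) :
      0 ≤ log (2 + |τ + mOst k + mOst (n - k)|) / (1 + |τ + mOst k + mOst (n - k)|) :=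
    div_nonneg (log_nonneg (le_add_of_le_of_nonneg one_le_two (abs_nonneg _))) (by positivity)
  calc _ ≤ ∑' k : {k : ℤ // k ≠ 0 ∧ k ≠ n}, G k :=
        (hG'.of_nonneg_of_le hnonneg hle').tsum_le_tsum hle' hG'
    _ ≤ ∑' k : ℤ, G k := hG.tsum_subtype_le G _ (fun _ => by positivity)
    _ ≤ 16 * (2 ^ (3 / 4 : ℝ) * Z) := by
        rw [tsum_mul_left, (hsum r₁).tsum_add (hsum r₂)]
        linarith [hbound r₁, hbound r₂]
end

section
/- For every ρ > 2/3 there exists C > 0 such that for every τ₁ ∈ ℝ and every nonzero integer n₁, ∑_{n ∈ ℤ, n ≠ 0, n ≠ n₁} log(1 + |τ₁ + m(n₁) - m(n - n₁)|) / (1 + |τ₁ + m(n₁) - m(n - n₁)|)^ρ ≤ C. -/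
theorem mOst_neg (k : ℤ) : mOst (-k) = -mOst k := by
  simp only [mOst, Int.cast_neg]
  ring

-- The slack `1` absorbs the `1 / k` terms, including the junk value `mOst 0 = 0`.
theorem abs_natCast_sub_pow_three_le_abs_mOst_sub_add_one (i j : ℕ) :
    |(i : ℝ) - j| ^ 3 ≤ |mOst i - mOst j| + 1 := by
  wlog hij : i ≤ j generalizing i j
  · rw [abs_sub_comm, abs_sub_comm (mOst i)]
    exact this j i (by omega)
  have hi : (0 : ℝ) ≤ i := i.cast_nonneg
  have hij' : (i : ℝ) ≤ j := by exact_mod_cast hij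
  have hcube : ((j : ℝ) - i) ^ 3 ≤ (j : ℝ) ^ 3 - (i : ℝ) ^ 3 := by
    nlinarith [mul_nonneg (mul_nonneg hi (hi.trans hij')) (sub_nonneg.2 hij')]
  have hj_inv : 1 / (j : ℝ) ≤ 1 := by simpa using Nat.cast_inv_le_one (α := ℝ) j
  have hi_inv : 0 ≤ 1 / (i : ℝ) := by positivity
  rw [abs_sub_comm, abs_of_nonneg (sub_nonneg.2 hij')]
  calc ((j : ℝ) - i) ^ 3 ≤ mOst j - mOst i + 1 := by
        simp only [mOst, Int.cast_natCast]
        linarith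
    _ ≤ |mOst i - mOst j| + 1 := by
        rw [abs_sub_comm]
        linarith [le_abs_self (mOst j - mOst i)]

theorem summable_one_add_abs_pow_three_rpow_neg {σ : ℝ} (hσ : 1 < 3 * σ) :
    Summable fun j : ℤ => (1 + |(j : ℝ)| ^ 3) ^ (-σ) := by
  refine (Real.summable_abs_int_rpow hσ).of_norm_bounded_eventually ?_
  filter_upwards [(Set.finite_singleton (0 : ℤ)).compl_mem_cofinite] with j hj
  have hj : 0 < |(j : ℝ)| := by simpa using hj
  rw [Real.norm_eq_abs, abs_of_nonneg (by positivity), neg_mul_eq_mul_neg, Real.rpow_mul hj.le,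
    Real.rpow_ofNat]
  exact Real.rpow_le_rpow_of_nonpos (by positivity) (by linarith) (by linarith)

theorem exists_one_add_pow_three_le_of_separated {a : ℕ → ℝ} {c : ℝ}
    (ha : ∀ i j : ℕ, |(i : ℝ) - j| ^ 3 ≤ |a i - a j| + c) (τ : ℝ) :
    ∃ i₀ : ℕ, ∀ i : ℕ, 1 + |(i : ℝ) - i₀| ^ 3 ≤ (2 + c) * (1 + |τ - a i|) := by
  have hc : 0 ≤ c := by simpa using ha 0 0
  have hbdd : BddBelow (Set.range fun i => |τ - a i|) :=
    ⟨0, by rintro _ ⟨i, rfl⟩; exact abs_nonneg _⟩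
  -- `a i₀` is within `1` of the best approximation of `τ`; no exact minimiser is needed.
  obtain ⟨i₀, hi₀⟩ := exists_lt_of_ciInf_lt (lt_add_one (⨅ i, |τ - a i|))
  refine ⟨i₀, fun i => ?_⟩
  have hnear : |τ - a i₀| ≤ |τ - a i| + 1 := hi₀.le.trans (by gcongr; exact ciInf_le hbdd i)
  have htri : |a i - a i₀| ≤ |τ - a i| + |τ - a i₀| := by
    simpa only [abs_sub_comm (a i) τ] using abs_sub_le (a i) τ (a i₀)
  nlinarith [ha i i₀, mul_nonneg hc (abs_nonneg (τ - a i))]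

theorem exists_tsum_rpow_le_of_separated {a : ℕ → ℝ} {c σ : ℝ}
    (ha : ∀ i j : ℕ, |(i : ℝ) - j| ^ 3 ≤ |a i - a j| + c) (hσ : 1 < 3 * σ) :
    ∃ C, ∀ τ : ℝ, Summable (fun i => (1 + |τ - a i|) ^ (-σ)) ∧
      ∑' i, (1 + |τ - a i|) ^ (-σ) ≤ C := by
  have hc : 0 ≤ c := by simpa using ha 0 0
  set g : ℤ → ℝ := fun j => (1 + |(j : ℝ)| ^ 3) ^ (-σ)
  have hg : Summable g := summable_one_add_abs_pow_three_rpow_neg hσ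
  have hg_nonneg : ∀ j, 0 ≤ g j := fun j => by positivity
  refine ⟨(2 + c) ^ σ * ∑' j, g j, fun τ => ?_⟩
  obtain ⟨i₀, hi₀⟩ := exists_one_add_pow_three_le_of_separated ha τ
  set e : ℕ → ℤ := fun i => i - i₀
  have he : Function.Injective e := fun i j h => by simpa [e] using h
  have hbound : ∀ i, (1 + |τ - a i|) ^ (-σ) ≤ (2 + c) ^ σ * g (e i) := fun i => by
    have h := Real.rpow_le_rpow_of_nonpos (by positivity) (hi₀ i) (by linarith : -σ ≤ 0)
    rw [Real.mul_rpow (by linarith) (by positivity), Real.rpow_neg (by linarith)] at h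
    have h2c : 0 < (2 + c) ^ σ := by positivity
    simp only [g, e, Int.cast_sub, Int.cast_natCast]
    rw [← inv_mul_le_iff₀ h2c]
    exact h
  have hmaj : Summable fun i => (2 + c) ^ σ * g (e i) := (hg.comp_injective he).mul_left _
  have hsum := hmaj.of_nonneg_of_le (fun i => by positivity) hbound
  refine ⟨hsum, ?_⟩
  calc ∑' i, (1 + |τ - a i|) ^ (-σ) ≤ ∑' i, (2 + c) ^ σ * g (e i) :=
        Summable.tsum_le_tsum hbound hsum hmaj
    _ = (2 + c) ^ σ * ∑' i, g (e i) := tsum_mul_left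
    _ ≤ (2 + c) ^ σ * ∑' j, g j := by
        gcongr
        exact tsum_comp_le_tsum_of_inj hg hg_nonneg he

theorem exists_tsum_rpow_mOst_le {σ : ℝ} (hσ : 1 < 3 * σ) :
    ∃ C, ∀ τ : ℝ, Summable (fun k : ℤ => (1 + |τ - mOst k|) ^ (-σ)) ∧
      ∑' k : ℤ, (1 + |τ - mOst k|) ^ (-σ) ≤ C := by
  obtain ⟨Cpos, hCpos⟩ := exists_tsum_rpow_le_of_separated (a := fun i : ℕ => mOst i)
    abs_natCast_sub_pow_three_le_abs_mOst_sub_add_one hσ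
  obtain ⟨Cneg, hCneg⟩ := exists_tsum_rpow_le_of_separated (a := fun i : ℕ => mOst (-(i + 1)))
    (c := 1) (fun i j => by
      have h := abs_natCast_sub_pow_three_le_abs_mOst_sub_add_one (i + 1) (j + 1)
      push_cast at h
      rw [add_sub_add_right_eq_sub, abs_sub_comm (mOst _)] at h
      rwa [mOst_neg, mOst_neg, neg_sub_neg]) hσ
  refine ⟨Cpos + Cneg, fun τ => ?_⟩
  obtain ⟨hs_pos, hb_pos⟩ := hCpos τ
  obtain ⟨hs_neg, hb_neg⟩ := hCneg τ
  set f : ℤ → ℝ := fun k => (1 + |τ - mOst k|) ^ (-σ)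
  refine ⟨.of_nat_of_neg_add_one (f := f) hs_pos hs_neg, ?_⟩
  rw [tsum_of_nat_of_neg_add_one (f := f) hs_pos hs_neg]
  exact add_le_add hb_pos hb_neg

theorem log_one_add_abs_div_rpow_le {ρ : ℝ} (hρ : 0 < ρ) (x : ℝ) :
    Real.log (1 + |x|) / (1 + |x|) ^ ρ ≤ 2 / ρ * (1 + |x|) ^ (-(ρ / 2)) := by
  have hx : 0 < 1 + |x| := by positivity
  calc Real.log (1 + |x|) / (1 + |x|) ^ ρ ≤ (1 + |x|) ^ (ρ / 2) / (ρ / 2) / (1 + |x|) ^ ρ := by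
        gcongr
        exact Real.log_le_rpow_div hx.le (by positivity)
    _ = 2 / ρ * (1 + |x|) ^ (-(ρ / 2)) := by
        have hsq : (1 + |x|) ^ ρ = (1 + |x|) ^ (ρ / 2) * (1 + |x|) ^ (ρ / 2) := by
          rw [← Real.rpow_add hx, add_halves]
        rw [Real.rpow_neg hx.le, hsq]
        field_simp

theorem ostrovsky_log_sum_rho (ρ : ℝ) (hρ : 2 / 3 < ρ) :
    ∃ C : ℝ, 0 < C ∧ ∀ (τ₁ : ℝ) (n₁ : ℤ), n₁ ≠ 0 →
      ∑' n : {n : ℤ // n ≠ 0 ∧ n ≠ n₁},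
        Real.log (1 + |τ₁ + mOst n₁ - mOst ((n : ℤ) - n₁)|) /
          (1 + |τ₁ + mOst n₁ - mOst ((n : ℤ) - n₁)|) ^ ρ ≤ C := by
  have hρ0 : 0 < ρ := by linarith
  obtain ⟨C, hC⟩ := exists_tsum_rpow_mOst_le (σ := ρ / 2) (by linarith)
  refine ⟨max (2 / ρ * C) 1, by positivity, fun τ₁ n₁ _ => ?_⟩
  set τ := τ₁ + mOst n₁
  obtain ⟨hsum, hle⟩ := hC τ
  set e : {n : ℤ // n ≠ 0 ∧ n ≠ n₁} → ℤ := fun n => n - n₁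
  have he : Function.Injective e := fun n n' h => Subtype.ext (by simpa [e] using h)
  set g : ℤ → ℝ := fun k => 2 / ρ * (1 + |τ - mOst k|) ^ (-(ρ / 2))
  have hg : Summable g := hsum.mul_left _
  have hterm_nonneg (x : ℝ) : 0 ≤ Real.log (1 + |x|) / (1 + |x|) ^ ρ :=
    div_nonneg (Real.log_nonneg (by simp)) (by positivity)
  have hterm_le (n : {n : ℤ // n ≠ 0 ∧ n ≠ n₁}) := log_one_add_abs_div_rpow_le hρ0 (τ - mOst (e n))
  calc _ ≤ ∑' k, g k := Summable.tsum_le_tsum_of_inj e he (fun k _ => by positivity) hterm_le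
          ((hg.comp_injective he).of_nonneg_of_le (fun n => hterm_nonneg _) hterm_le) hg
    _ = 2 / ρ * ∑' k, (1 + |τ - mOst k|) ^ (-(ρ / 2)) := tsum_mul_left
    _ ≤ max (2 / ρ * C) 1 := le_max_of_le_left (by gcongr)
end

section
/- Let s ≥ -1/2 and, for real τ, τ₁ and nonzero integers n, n₁ with n ≠ n₁, set σ = max(|τ + m(n)|, |τ₁ + m(n₁)|, |τ - τ₁ + m(n - n₁)|). Then F_s := |n|^{2s+2} |n₁ (n - n₁)|^{-2s} / σ ≤ C for an absolute constant C. -/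
lemma one_le_abs_intCast {k : ℤ} (hk : k ≠ 0) : (1 : ℝ) ≤ |(k : ℝ)| := by
  rw [← Int.cast_abs]
  exact_mod_cast Int.one_le_abs hk

lemma abs_add_le_two_mul_abs_mul {u v : ℝ} (hu : 1 ≤ |u|) (hv : 1 ≤ |v|) :
    |u + v| ≤ 2 * |u * v| := by
  rw [abs_mul]
  nlinarith [abs_add_le u v]

lemma abs_sub_sub_le_three_mul_max (x y z : ℝ) :
    |x - y - z| ≤ 3 * max |x| (max |y| |z|) := by
  have h := (abs_sub (x - y) z).trans (add_le_add_left (abs_sub x y) |z|)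
  have := le_max_left |x| (max |y| |z|)
  have := (le_max_left |y| |z|).trans (le_max_right |x| (max |y| |z|))
  have := (le_max_right |y| |z|).trans (le_max_right |x| (max |y| |z|))
  linarith

lemma mOst_sub_mOst_sub_mOst {n n₁ : ℤ} (hn : n ≠ 0) (hn₁ : n₁ ≠ 0) (hne : n₁ ≠ n) :
    mOst n - mOst n₁ - mOst (n - n₁) =
      3 * n * (n₁ * (n - n₁)) + n / (n₁ * (n - n₁)) - 1 / n := by
  have hd : (n : ℝ) - n₁ ≠ 0 := sub_ne_zero.mpr (by exact_mod_cast hne.symm)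
  have : (n : ℝ) ≠ 0 := by exact_mod_cast hn
  have : (n₁ : ℝ) ≠ 0 := by exact_mod_cast hn₁
  simp only [mOst, Int.cast_sub]
  field_simp
  ring

lemma two_mul_abs_mul_abs_le_abs_resonance {a b : ℝ} (ha : 1 ≤ |a|) (hb : 1 ≤ |b|) :
    2 * |a| * |b| ≤ |3 * a * b + a / b - 1 / a| := by
  have ha0 : a ≠ 0 := abs_pos.mp (by linarith)
  have hb0 : b ≠ 0 := abs_pos.mp (by linarith)
  have hab : 0 < |a * b| := by positivity
  -- `a²b² + a² ≥ b² ≥ |b| ≥ b`, so the polynomial below dominates `2a²b²`.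
  have hpoly : 2 * (a * b) ^ 2 ≤ 3 * (a * b) ^ 2 + a ^ 2 - b := by
    nlinarith [sq_abs a, sq_abs b, le_abs_self b, mul_le_mul ha hb zero_le_one (abs_nonneg a),
      mul_le_mul hb hb zero_le_one (abs_nonneg b)]
  have hmul : (3 * a * b + a / b - 1 / a) * (a * b) = 3 * (a * b) ^ 2 + a ^ 2 - b := by
    field_simp
  have habs : |3 * a * b + a / b - 1 / a| * |a * b| = 3 * (a * b) ^ 2 + a ^ 2 - b := by
    rw [← abs_mul, hmul, abs_of_nonneg (by nlinarith [sq_nonneg (a * b)])]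
  have hsq : |a| * |b| * |a * b| = (a * b) ^ 2 := by rw [← abs_mul, ← sq, sq_abs]
  refine le_of_mul_le_mul_right ?_ hab
  linarith

lemma rpow_add_one_mul_rpow_one_sub_le {N B c p : ℝ} (hN : 0 < N) (hB : 0 < B) (hp : 0 ≤ p)
    (hNB : N ≤ c * B) : N ^ (p + 1) * B ^ (1 - p) ≤ c ^ p * (N * B) := by
  have hsplit : N ^ (p + 1) * B ^ (1 - p) = (N / B) ^ p * (N * B) := by
    rw [Real.div_rpow hN.le hB.le, Real.rpow_add_one hN.ne', sub_eq_add_neg, add_comm,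
      Real.rpow_add hB, Real.rpow_neg hB.le, Real.rpow_one]
    field_simp
  rw [hsplit]
  gcongr
  rwa [div_le_iff₀ hB]

theorem ostrovsky_Fs_bound (s : ℝ) (hs : -1/2 ≤ s) :
    ∃ C : ℝ, 0 < C ∧ ∀ (τ τ₁ : ℝ) (n n₁ : ℤ), n ≠ 0 → n₁ ≠ 0 → n₁ ≠ n →
      |(n : ℝ)| ^ (2 * s + 2) * |(n₁ : ℝ) * ((n : ℝ) - (n₁ : ℝ))| ^ (-(2 * s)) /
          max |τ + mOst n| (max |τ₁ + mOst n₁| |τ - τ₁ + mOst (n - n₁)|) ≤ C := by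
  refine ⟨3 / 2 * 2 ^ (2 * s + 1), by positivity, fun τ τ₁ n n₁ hn hn₁ hne => ?_⟩
  set σ := max |τ + mOst n| (max |τ₁ + mOst n₁| |τ - τ₁ + mOst (n - n₁)|)
  have hn₁' := one_le_abs_intCast hn₁
  have hd := one_le_abs_intCast (sub_ne_zero.mpr hne.symm)
  push_cast at hd
  have hb : 1 ≤ |(n₁ : ℝ) * ((n : ℝ) - n₁)| := by rw [abs_mul]; nlinarith
  have hσ : 2 * |(n : ℝ)| * |(n₁ : ℝ) * ((n : ℝ) - n₁)| ≤ 3 * σ := by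
    have := abs_sub_sub_le_three_mul_max (τ + mOst n) (τ₁ + mOst n₁) (τ - τ₁ + mOst (n - n₁))
    have hres : τ + mOst n - (τ₁ + mOst n₁) - (τ - τ₁ + mOst (n - n₁)) =
        mOst n - mOst n₁ - mOst (n - n₁) := by ring
    rw [hres, mOst_sub_mOst_sub_mOst hn hn₁ hne] at this
    exact (two_mul_abs_mul_abs_le_abs_resonance (one_le_abs_intCast hn) hb).trans this
  have hσpos : 0 < σ := by nlinarith [one_le_abs_intCast hn]
  have hnb : |(n : ℝ)| ≤ 2 * |(n₁ : ℝ) * ((n : ℝ) - n₁)| := by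
    simpa only [add_sub_cancel] using abs_add_le_two_mul_abs_mul hn₁' hd
  have hF := rpow_add_one_mul_rpow_one_sub_le (p := 2 * s + 1)
    (by linarith [one_le_abs_intCast hn]) (by linarith) (by linarith) hnb
  rw [show 2 * s + 1 + 1 = 2 * s + 2 by ring, show 1 - (2 * s + 1) = -(2 * s) by ring] at hF
  rw [div_le_iff₀ hσpos]
  calc _ ≤ 2 ^ (2 * s + 1) * (|(n : ℝ)| * |(n₁ : ℝ) * ((n : ℝ) - n₁)|) := hF
    _ ≤ 2 ^ (2 * s + 1) * (3 / 2 * σ) := mul_le_mul_of_nonneg_left (by linarith) (by positivity)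
    _ = 3 / 2 * 2 ^ (2 * s + 1) * σ := by ring
end

section
/- Let -1/2 ≤ s and 0 < r < 1/4. With σ = max(|τ + m(n)|, |τ₁ + m(n₁)|, |τ - τ₁ + m(n - n₁)|), one has F_{s,r} := |n|^{2s+2} |n₁ (n - n₁)|^{-2s} / σ^{2(1-r)} ≤ C / |n|^{2-4r} for a constant C depending only on s and r. -/
lemma mul_abs_le_abs_mul_add_div {b c : ℝ} (hb : 0 ≤ b) (hc : 0 ≤ c) (x : ℝ) :
    b * |x| ≤ |b * x + c / x| := by
  rcases le_total 0 x with hx | hx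
  · rw [abs_of_nonneg hx, abs_of_nonneg (by positivity)]
    linarith [div_nonneg hc hx]
  · rw [abs_of_nonpos hx, abs_of_nonpos (add_nonpos (mul_nonpos_of_nonneg_of_nonpos hb hx)
      (div_nonpos_of_nonneg_of_nonpos hc hx))]
    linarith [div_nonpos_of_nonneg_of_nonpos hc hx]

lemma abs_add_le_two_mul_abs_mul_s9 {x y : ℝ} (hx : 1 ≤ |x|) (hy : 1 ≤ |y|) :
    |x + y| ≤ 2 * |x * y| := by
  rw [abs_mul]
  nlinarith [abs_add_le x y, mul_nonneg (sub_nonneg.2 hx) (sub_nonneg.2 hy)]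

lemma rpow_mul_rpow_neg_div_le {a A σ p q t : ℝ} (ha : 0 < a) (haA : a ≤ 2 * A)
    (hσ : a * A ≤ σ) (ht : 0 ≤ t) (hqt : 0 ≤ q + t) :
    a ^ p * A ^ (-q) / σ ^ t ≤ 2 ^ (q + t) / a ^ (2 * t + q - p) := by
  have hA : 0 < A := by linarith
  calc a ^ p * A ^ (-q) / σ ^ t ≤ a ^ p * A ^ (-q) / (a * A) ^ t := by gcongr
    _ = a ^ (p - t) * A ^ (-(q + t)) := by
      rw [Real.mul_rpow ha.le hA.le, Real.rpow_sub ha, Real.rpow_neg hA.le, Real.rpow_neg hA.le,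
        Real.rpow_add hA]
      field_simp
    _ ≤ a ^ (p - t) * (a / 2) ^ (-(q + t)) :=
      mul_le_mul_of_nonneg_left
        (Real.rpow_le_rpow_of_nonpos (by positivity) (by linarith) (by linarith)) (by positivity)
    _ = 2 ^ (q + t) / a ^ (2 * t + q - p) := by
      rw [Real.div_rpow ha.le zero_le_two, Real.rpow_neg zero_le_two, Real.rpow_neg ha.le,
        show 2 * t + q - p = (q + t) - (p - t) by ring, Real.rpow_sub ha (q + t) (p - t)]
      field_simp

section Resonance

variable {n n₁ : ℤ}

lemma mOst_resonance (hn : n ≠ 0) (hn₁ : n₁ ≠ 0) (hne : n₁ ≠ n) :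
    mOst n - mOst n₁ - mOst (n - n₁) =
      3 * ((n : ℝ) * (n₁ * (n - n₁))) + ((n : ℝ) ^ 2 - n * n₁ + n₁ ^ 2) / (n * (n₁ * (n - n₁))) := by
  have hn' : (n : ℝ) ≠ 0 := Int.cast_ne_zero.mpr hn
  have hn₁' : (n₁ : ℝ) ≠ 0 := Int.cast_ne_zero.mpr hn₁
  have hd : (n : ℝ) - n₁ ≠ 0 := sub_ne_zero.mpr (Int.cast_injective.ne hne.symm)
  simp only [mOst]
  push_cast
  field_simp
  ring

lemma abs_mul_abs_le_max_modulation (hn : n ≠ 0) (hn₁ : n₁ ≠ 0) (hne : n₁ ≠ n) (τ τ₁ : ℝ) :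
    |(n : ℝ)| * |(n₁ : ℝ) * ((n : ℝ) - (n₁ : ℝ))| ≤
      max |τ + mOst n| (max |τ₁ + mOst n₁| |τ - τ₁ + mOst (n - n₁)|) := by
  have hmax := abs_sub_sub_le_three_mul_max (τ + mOst n) (τ₁ + mOst n₁) (τ - τ₁ + mOst (n - n₁))
  rw [show τ + mOst n - (τ₁ + mOst n₁) - (τ - τ₁ + mOst (n - n₁)) =
      mOst n - mOst n₁ - mOst (n - n₁) by ring, mOst_resonance hn hn₁ hne] at hmax
  have hP : 0 ≤ (n : ℝ) ^ 2 - n * n₁ + n₁ ^ 2 := by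
    nlinarith [sq_nonneg ((n : ℝ) - n₁), sq_nonneg (n : ℝ), sq_nonneg (n₁ : ℝ)]
  have hres := mul_abs_le_abs_mul_add_div zero_le_three hP ((n : ℝ) * (n₁ * (n - n₁)))
  rw [abs_mul (n : ℝ)] at hres
  linarith

end Resonance

theorem ostrovsky_Fsr_bound_general (s r : ℝ) (hs : -1/2 ≤ s) (hr : r < 1/4) :
    ∃ C : ℝ, 0 < C ∧ ∀ (τ τ₁ : ℝ) (n n₁ : ℤ), n ≠ 0 → n₁ ≠ 0 → n₁ ≠ n →
      |(n : ℝ)| ^ (2 * s + 2) * |(n₁ : ℝ) * ((n : ℝ) - (n₁ : ℝ))| ^ (-(2 * s)) /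
          (max |τ + mOst n| (max |τ₁ + mOst n₁| |τ - τ₁ + mOst (n - n₁)|)) ^ (2 * (1 - r)) ≤
        C / |(n : ℝ)| ^ (2 - 4 * r) := by
  refine ⟨2 ^ (2 * s + 2 * (1 - r)), by positivity, fun τ τ₁ n n₁ hn hn₁ hne => ?_⟩
  have hsplit : |(n : ℝ)| ≤ 2 * |(n₁ : ℝ) * ((n : ℝ) - (n₁ : ℝ))| := by
    have hn₁' : (1 : ℝ) ≤ |(n₁ : ℝ)| := by exact_mod_cast Int.one_le_abs hn₁
    have hd : (1 : ℝ) ≤ |(n : ℝ) - n₁| := by exact_mod_cast Int.one_le_abs (sub_ne_zero.2 hne.symm)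
    simpa using abs_add_le_two_mul_abs_mul_s9 hn₁' hd
  convert rpow_mul_rpow_neg_div_le (p := 2 * s + 2) (q := 2 * s) (t := 2 * (1 - r))
    (abs_pos.2 (Int.cast_ne_zero.2 hn)) hsplit (abs_mul_abs_le_max_modulation hn hn₁ hne τ τ₁)
    (by linarith) (by linarith) using 3
  ring

theorem ostrovsky_Fsr_bound (s r : ℝ) (hs : -1/2 ≤ s) (hr0 : 0 < r) (hr : r < 1/4) :
    ∃ C : ℝ, 0 < C ∧ ∀ (τ τ₁ : ℝ) (n n₁ : ℤ), n ≠ 0 → n₁ ≠ 0 → n₁ ≠ n →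
      |(n : ℝ)| ^ (2 * s + 2) * |(n₁ : ℝ) * ((n : ℝ) - (n₁ : ℝ))| ^ (-(2 * s)) /
          (max |τ + mOst n| (max |τ₁ + mOst n₁| |τ - τ₁ + mOst (n - n₁)|)) ^ (2 * (1 - r)) ≤
        C / |(n : ℝ)| ^ (2 - 4 * r) :=
  ostrovsky_Fsr_bound_general s r hs hr
end
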